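/- Let Γ be a countable group, let E be an equivalence relation on a standard Borel space X, and let k ≥ 1. Define equivalence relations F_i by F_0 = E^{Γ^k} (the product relation on X^{Γ^k}, where Γ^k is the direct product of k copies of Γ) and F_{i+1} = (F_i)^{[Γ]}. Then E^{[Γ^k]} is Borel reducible to F_k. -/

import Mathlib

universe u v

/-- The Γ-jump of an equivalence relation `E` on `X`. -/
def GammaJump (Γ : Type*) [Group Γ] {X : Type*} (E : X → X → Prop) :
    (Γ → X) → (Γ → X) → Prop :=
  fun x y => ∃ γ : Γ, ∀ α : Γ, E (x (γ⁻¹ * α)) (y α)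

/-- Borel reducibility of binary relations on measurable spaces. -/
def BorelReducible {X Y : Type*} [MeasurableSpace X] [MeasurableSpace Y]
    (E : X → X → Prop) (F : Y → Y → Prop) : Prop :=
  ∃ f : X → Y, Measurable f ∧ ∀ x x', E x x' ↔ F (f x) (f x')

/-- Domain of the `i`-th iterate: `D 0 = X^{Γ^k}`, `D (i+1) = Γ → D i`. -/
def JumpIterDom (Γ : Type u) (X : Type v) (k : ℕ) : ℕ → Type (max u v)
  | 0 => (Fin k → Γ) → X
  | i + 1 => Γ → JumpIterDom Γ X k i

instance instMeasurableSpaceJumpIterDom (Γ : Type u) (X : Type v) [MeasurableSpace X]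
    (k : ℕ) : (i : ℕ) → MeasurableSpace (JumpIterDom Γ X k i)
  | 0 => inferInstanceAs (MeasurableSpace ((Fin k → Γ) → X))
  | i + 1 =>
      letI := instMeasurableSpaceJumpIterDom Γ X k i
      inferInstanceAs (MeasurableSpace (Γ → JumpIterDom Γ X k i))

/-- The relations `F_i`: `F_0 = E^{Γ^k}` (the product relation on `X^{Γ^k}`) and
`F_{i+1} = (F_i)^{[Γ]}`. -/
def JumpIterRel (Γ : Type u) [Group Γ] {X : Type v} (E : X → X → Prop) (k : ℕ) :
    (i : ℕ) → JumpIterDom Γ X k i → JumpIterDom Γ X k i → Prop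
  | 0 => fun x y => ∀ v : Fin k → Γ, E (x v) (y v)
  | i + 1 => GammaJump Γ (JumpIterRel Γ E k i)

/-!
Write `H_i ≤ Γ^k` for the subgroup of tuples supported on the coordinates `< i`, and say that
`x y : X^{Γ^k}` are `E^{[H]}`-related if `E (x (δ * v)) (y v)` for some `δ ∈ H` and all `v`.
Sending `x` to `α ↦ (x translated by α in coordinate i)`, iterated over `i`, maps `X^{Γ^k}`
into the domain of `F_i`, and by induction on `i` it reduces `E^{[H_i]}` to `F_i`: an element
of `H_{i+1}` splits as (its coordinate `i`) times (an element of `H_i`), and the two factors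
commute. Since `H_k = Γ^k` and `E^{[Γ^k]}` is the `Γ^k`-jump, this is the required reduction.
-/

def SubgroupJump {G X : Type*} [Group G] (H : Subgroup G) (E : X → X → Prop) (x y : G → X) :
    Prop :=
  ∃ δ ∈ H, ∀ v, E (x (δ * v)) (y v)

theorem subgroupJump_top_iff {G X : Type*} [Group G] (E : X → X → Prop) (x y : G → X) :
    SubgroupJump ⊤ E x y ↔ GammaJump G E x y :=
  ⟨fun ⟨δ, _, h⟩ => ⟨δ⁻¹, by simpa using h⟩, fun ⟨γ, h⟩ => ⟨γ⁻¹, trivial, h⟩⟩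

section Coordinates

variable {Γ : Type u} [Group Γ] (k : ℕ)

def coordSingle (i : ℕ) : Γ →* (Fin k → Γ) where
  toFun a j := if j.1 = i then a else 1
  map_one' := by ext; simp
  map_mul' a b := by ext; simp only [Pi.mul_apply]; split_ifs <;> simp

theorem coordSingle_apply (i : ℕ) (a : Γ) (j : Fin k) :
    coordSingle k i a j = if j.1 = i then a else 1 :=
  rfl

def supportedBelow (i : ℕ) : Subgroup (Fin k → Γ) where
  carrier := {δ | ∀ j : Fin k, i ≤ j.1 → δ j = 1}
  mul_mem' ha hb j hj := by simp [ha j hj, hb j hj]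
  one_mem' _ _ := rfl
  inv_mem' ha j hj := by simp [ha j hj]

variable {k}

theorem supportedBelow_zero : supportedBelow k 0 = (⊥ : Subgroup (Fin k → Γ)) :=
  (Subgroup.eq_bot_iff_forall _).2 fun _ hδ => funext fun j => hδ j j.1.zero_le

theorem supportedBelow_self : supportedBelow k k = (⊤ : Subgroup (Fin k → Γ)) :=
  (Subgroup.eq_top_iff' _).2 fun _ j hj => absurd j.2 hj.not_gt

theorem coordSingle_mem_supportedBelow_succ (i : ℕ) (a : Γ) :
    coordSingle k i a ∈ supportedBelow k (i + 1) :=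
  fun j hj => if_neg (by omega)

theorem supportedBelow_le_succ (i : ℕ) :
    supportedBelow k i ≤ (supportedBelow k (i + 1) : Subgroup (Fin k → Γ)) :=
  fun _ hδ j hj => hδ j (by omega)

theorem commute_coordSingle_of_mem_supportedBelow {i : ℕ} {δ : Fin k → Γ}
    (hδ : δ ∈ supportedBelow k i) (a : Γ) : Commute (coordSingle k i a) δ := by
  funext j
  by_cases hj : j.1 = i
  · simp [coordSingle_apply, hj, hδ j hj.ge]
  · simp [coordSingle_apply, hj]

theorem exists_coordSingle_mul_of_mem_supportedBelow_succ {i : ℕ} {δ : Fin k → Γ}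
    (hδ : δ ∈ supportedBelow k (i + 1)) :
    ∃ a : Γ, ∃ δ' ∈ supportedBelow k i, δ = coordSingle k i a * δ' := by
  by_cases hi : i < k
  · refine ⟨δ ⟨i, hi⟩, (coordSingle k i (δ ⟨i, hi⟩))⁻¹ * δ, fun j hj => ?_, by simp⟩
    rcases hj.eq_or_lt with rfl | hlt
    · simp [coordSingle_apply]
    · simp [coordSingle_apply, hlt.ne', hδ j hlt]
  · exact ⟨1, δ, fun j hj => hδ j (by omega), by simp⟩

end Coordinates

section Embedding

variable (Γ : Type u) [Group Γ] (X : Type v) (k : ℕ)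

def jumpIterEmbed : (i : ℕ) → ((Fin k → Γ) → X) → JumpIterDom Γ X k i
  | 0, x => x
  | i + 1, x => fun α => jumpIterEmbed i fun v => x (coordSingle k i α * v)

theorem measurable_jumpIterEmbed [MeasurableSpace X] :
    ∀ i, Measurable (jumpIterEmbed Γ X k i)
  | 0 => measurable_id
  | i + 1 => measurable_pi_lambda _ fun α =>
      (measurable_jumpIterEmbed i).comp
        (measurable_pi_lambda _ fun v => measurable_pi_apply (coordSingle k i α * v))

variable {Γ X k}

theorem jumpIterRel_jumpIterEmbed_iff (E : X → X → Prop) (i : ℕ) (x y : (Fin k → Γ) → X) :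
    JumpIterRel Γ E k i (jumpIterEmbed Γ X k i x) (jumpIterEmbed Γ X k i y) ↔
      SubgroupJump (supportedBelow k i) E x y := by
  induction i generalizing x y with
  | zero => simp [JumpIterRel, jumpIterEmbed, SubgroupJump, supportedBelow_zero]
  | succ i ih =>
    simp only [JumpIterRel, GammaJump, jumpIterEmbed, ih]
    constructor
    · rintro ⟨γ, hγ⟩
      obtain ⟨δ, hδ, hxy⟩ := hγ 1
      refine ⟨coordSingle k i γ⁻¹ * δ, ?_, fun v => ?_⟩
      · exact mul_mem (coordSingle_mem_supportedBelow_succ i γ⁻¹) (supportedBelow_le_succ i hδ)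
      · simpa [mul_assoc] using hxy v
    · rintro ⟨δ, hδ, hxy⟩
      obtain ⟨a, δ', hδ', rfl⟩ := exists_coordSingle_mul_of_mem_supportedBelow_succ hδ
      refine ⟨a⁻¹, fun α => ⟨δ', hδ', fun v => ?_⟩⟩
      simpa only [map_mul, inv_inv, mul_assoc,
        (commute_coordSingle_of_mem_supportedBelow hδ' α).left_comm] using
        hxy (coordSingle k i α * v)

end Embedding

theorem gammaJump_pow_borelReducible_iter_general
    {X : Type v} [MeasurableSpace X]
    (E : X → X → Prop)
    (Γ : Type u) [Group Γ] (k : ℕ) :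
    BorelReducible (GammaJump (Fin k → Γ) E) (JumpIterRel Γ E k k) :=
  ⟨jumpIterEmbed Γ X k k, measurable_jumpIterEmbed Γ X k k, fun x y => by
    rw [jumpIterRel_jumpIterEmbed_iff, supportedBelow_self, subgroupJump_top_iff]⟩

/-- For a countable group `Γ`, an equivalence relation `E` on a standard
Borel space `X` and `k ≥ 1`, `E^{[Γ^k]}` is Borel reducible to `F_k`, where
`F_0 = E^{Γ^k}` and `F_{i+1} = (F_i)^{[Γ]}`. -/
theorem gammaJump_pow_borelReducible_iter
    {X : Type v} [MeasurableSpace X] [StandardBorelSpace X]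
    (E : X → X → Prop) (hE : Equivalence E)
    (Γ : Type u) [Group Γ] [Countable Γ] (k : ℕ) (hk : 1 ≤ k) :
    BorelReducible (GammaJump (Fin k → Γ) E) (JumpIterRel Γ E k k) :=
  gammaJump_pow_borelReducible_iter_general E Γ k
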